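/- arXiv:1409.2603 — 4 statements merged into one kernel-verified Lean document; each statement's English description precedes it below -/
import Mathlib

section
/- Let A(j) = x_A + y_A·j be an arithmetic progression with y_A > 0, and let B : ℕ → ℝ be a strictly increasing sequence with |A(j) − B(j)| ≤ c·y_A for all j, where c ≥ 0 is a constant. Then for every x, |r(x, A) − r(x, B)| ≤ 3c + 1, where r(x, ·) counts the number of sequence elements ≤ x. -/
/-!
Moving every term by at most `δ = c·y_A` can only change whether a term lies below `x` for
terms within `δ` of `x`, so both counts lie between the counts of the progression at `x - δ` and
at `x + δ`. The progression has `⌊(t - x_A) / y_A + 1⌋₊` terms `≤ t`, so those two counts differ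
by at most `2δ / y_A + 1 = 2c + 1`.
-/

theorem setOf_natCast_le_eq_Iio (u : ℝ) : {j : ℕ | (j : ℝ) ≤ u} = Set.Iio ⌊u + 1⌋₊ := by
  ext j
  change (j : ℝ) ≤ u ↔ _
  rw [Set.mem_Iio, Nat.lt_iff_add_one_le, Nat.le_floor_iff' j.succ_ne_zero]
  push_cast
  exact (add_le_add_iff_right 1).symm

theorem setOf_add_mul_le_eq_Iio {a d : ℝ} (hd : 0 < d) (t : ℝ) :
    {j : ℕ | a + d * j ≤ t} = Set.Iio ⌊(t - a) / d + 1⌋₊ := by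
  rw [← setOf_natCast_le_eq_Iio]
  ext j
  change a + d * j ≤ t ↔ (j : ℝ) ≤ (t - a) / d
  rw [le_div_iff₀ hd, le_sub_iff_add_le', mul_comm]

theorem natCard_setOf_add_mul_le {a d : ℝ} (hd : 0 < d) (t : ℝ) :
    Nat.card {j : ℕ | a + d * j ≤ t} = ⌊(t - a) / d + 1⌋₊ := by
  rw [setOf_add_mul_le_eq_Iio hd, ← Finset.coe_Iio, Nat.card_coe_set_eq, Set.ncard_coe_finset,
    Nat.card_Iio]

theorem monotone_natCard_setOf_add_mul_le {a d : ℝ} (hd : 0 < d) :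
    Monotone fun t : ℝ => Nat.card {j : ℕ | a + d * j ≤ t} := by
  intro s t hst
  simp only [natCard_setOf_add_mul_le hd]
  gcongr

theorem natCast_floor_add_le {u s : ℝ} (hs : 0 ≤ s) : (⌊u + s⌋₊ : ℝ) ≤ ⌊u⌋₊ + s + 1 := by
  rcases lt_or_ge (u + s) 0 with hneg | hnonneg
  · rw [Nat.floor_eq_zero.2 (hneg.trans zero_lt_one), Nat.cast_zero]
    linarith [(⌊u⌋₊.cast_nonneg : (0 : ℝ) ≤ ⌊u⌋₊)]
  · linarith [Nat.floor_le hnonneg, Nat.lt_floor_add_one u]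

theorem natCard_setOf_add_mul_le_add_le {a d w : ℝ} (hd : 0 < d) (hw : 0 ≤ w) (t : ℝ) :
    (Nat.card {j : ℕ | a + d * j ≤ t + w} : ℝ) ≤ Nat.card {j : ℕ | a + d * j ≤ t} + w / d + 1 := by
  simp only [natCard_setOf_add_mul_le hd]
  rw [show (t + w - a) / d + 1 = ((t - a) / d + 1) + w / d by ring]
  exact natCast_floor_add_le (div_nonneg hw hd.le)

theorem abs_natCast_sub_natCast_le {a b lo hi : ℕ} {w : ℝ} (ha : a ∈ Set.Icc lo hi)
    (hb : b ∈ Set.Icc lo hi) (hw : (hi : ℝ) ≤ lo + w) : |(a : ℝ) - b| ≤ w := by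
  simp only [Set.mem_Icc, ← Nat.cast_le (α := ℝ)] at ha hb
  rw [abs_sub_le_iff]
  constructor <;> linarith

section Perturbation

variable {f g : ℕ → ℝ} {δ : ℝ}

theorem setOf_le_subset_setOf_le_add_of_abs_sub_le (h : ∀ j, |f j - g j| ≤ δ) (x : ℝ) :
    {j | g j ≤ x} ⊆ {j | f j ≤ x + δ} :=
  fun j (hj : g j ≤ x) => show f j ≤ x + δ by linarith [(abs_le.1 (h j)).2]

theorem setOf_le_sub_subset_setOf_le_of_abs_sub_le (h : ∀ j, |f j - g j| ≤ δ) (x : ℝ) :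
    {j | f j ≤ x - δ} ⊆ {j | g j ≤ x} :=
  fun j (hj : f j ≤ x - δ) => show g j ≤ x by linarith [(abs_le.1 (h j)).1]

/-- `Nat.card` of an infinite set is `0`, hence the finiteness hypothesis. -/
theorem natCard_setOf_le_mem_Icc_of_abs_sub_le (h : ∀ j, |f j - g j| ≤ δ) {x : ℝ}
    (hfin : {j | f j ≤ x + δ}.Finite) :
    Nat.card {j | g j ≤ x} ∈
      Set.Icc (Nat.card {j | f j ≤ x - δ}) (Nat.card {j | f j ≤ x + δ}) := by
  have hupper := setOf_le_subset_setOf_le_add_of_abs_sub_le h x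
  exact ⟨Nat.card_mono (hfin.subset hupper) (setOf_le_sub_subset_setOf_le_of_abs_sub_le h x),
    Nat.card_mono hfin hupper⟩

end Perturbation

theorem rank_close_of_seq_close_general (xA yA c : ℝ) (hy : 0 < yA)
    (B : ℕ → ℝ)
    (hclose : ∀ j : ℕ, |(xA + yA * j) - B j| ≤ c * yA) (x : ℝ) :
    |(Nat.card {j : ℕ | xA + yA * j ≤ x} : ℝ) -
      (Nat.card {j : ℕ | B j ≤ x} : ℝ)| ≤ 3 * c + 1 := by
  set δ := c * yA
  have hδ : 0 ≤ δ := (abs_nonneg _).trans (hclose 0)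
  have hc : 0 ≤ c := nonneg_of_mul_nonneg_left hδ hy
  have hfin : {j : ℕ | xA + yA * j ≤ x + δ}.Finite := by
    rw [setOf_add_mul_le_eq_Iio hy]
    exact Set.finite_Iio _
  have hgap : (Nat.card {j : ℕ | xA + yA * j ≤ x + δ} : ℝ) ≤
      Nat.card {j : ℕ | xA + yA * j ≤ x - δ} + (2 * c + 1) := by
    have h := natCard_setOf_add_mul_le_add_le (a := xA) hy (by positivity : 0 ≤ 2 * δ) (x - δ)
    rw [show x - δ + 2 * δ = x + δ by ring, mul_div_assoc, mul_div_cancel_right₀ c hy.ne'] at h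
    linarith
  have hmono := monotone_natCard_setOf_add_mul_le (a := xA) hy
  refine (abs_natCast_sub_natCast_le ⟨hmono (sub_le_self x hδ), hmono (le_add_of_nonneg_right hδ)⟩
    (natCard_setOf_le_mem_Icc_of_abs_sub_le hclose hfin) hgap).trans ?_
  linarith

theorem rank_close_of_seq_close (xA yA c : ℝ) (hy : 0 < yA) (hc : 0 ≤ c)
    (B : ℕ → ℝ) (hB : StrictMono B)
    (hclose : ∀ j : ℕ, |(xA + yA * j) - B j| ≤ c * yA) (x : ℝ) :
    |(Nat.card {j : ℕ | xA + yA * j ≤ x} : ℝ) -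
      (Nat.card {j : ℕ | B j ≤ x} : ℝ)| ≤ 3 * c + 1 :=
  rank_close_of_seq_close_general xA yA c hy B hclose x
end

section
/- Let A and B be strictly increasing sequences ℕ → ℝ tending to infinity with rank functions r(·, A), r(·, B). Fix x and set a = r(x, A), b = r(x, B) (so A(a−1) ≤ x < A(a) using 0-indexed counts). If A is arithmetic with common difference y > 0, b ≥ 1, and A(b−1) ≥ x, then b − a ≤ ⌈c⌉ + 1 whenever |A(j) − B(j)| ≤ c·y for all j. -/
/-!
Some index m ≥ b - 1 has B m ≤ x, while A a > x because A is increasing. Closeness then gives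
A m ≤ B m + c y ≤ x + c y < A a + c y, i.e. m < a + c, so b - 1 - a < c.
-/

open Filter

lemma finite_setOf_le_of_tendsto_atTop {α : Type*} [LinearOrder α] [NoMaxOrder α] {f : ℕ → α}
    (hf : Tendsto f atTop atTop) (x : α) : {j | f j ≤ x}.Finite := by
  simpa [← Nat.cofinite_eq_atTop, Filter.eventually_cofinite] using hf.eventually_gt_atTop x

lemma Nat.exists_mem_le_of_lt_card {S : Set ℕ} {n : ℕ} (hn : n < Nat.card S) :
    ∃ m ∈ S, n ≤ m := by
  by_contra! h
  have hsub : S ⊆ Set.Iio n := fun m hm => h m hm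
  have := Set.ncard_le_ncard hsub (Set.finite_Iio n)
  rw [Set.ncard_Iio_nat, ← Nat.card_coe_set_eq] at this
  omega

lemma Monotone.natCard_notMem_setOf_le {α : Type*} [Preorder α] {f : ℕ → α} (hf : Monotone f)
    {x : α} (hfin : {j | f j ≤ x}.Finite) : Nat.card {j | f j ≤ x} ∉ {j | f j ≤ x} := by
  intro hn
  have hsub : Set.Iic (Nat.card {j | f j ≤ x}) ⊆ {j | f j ≤ x} := fun i hi => (hf hi).trans hn
  have := Set.ncard_le_ncard hsub hfin
  rw [Set.ncard_Iic_nat, ← Nat.card_coe_set_eq] at this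
  omega

lemma tendsto_const_add_mul_natCast_atTop (xA : ℝ) {y : ℝ} (hy : 0 < y) :
    Tendsto (fun j : ℕ => xA + y * j) atTop atTop :=
  tendsto_atTop_add_const_left _ _ (tendsto_natCast_atTop_atTop.const_mul_atTop hy)

theorem rank_diff_case_one_general (xA y c : ℝ) (hy : 0 < y)
    (B : ℕ → ℝ)
    (hclose : ∀ j : ℕ, |(xA + y * j) - B j| ≤ c * y) (x : ℝ)
    (a b : ℕ) (ha : a = Nat.card {j : ℕ | xA + y * j ≤ x})
    (hb : b = Nat.card {j : ℕ | B j ≤ x})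
    (hb1 : 1 ≤ b) :
    (b : ℤ) - a ≤ ⌈c⌉ + 1 := by
  obtain ⟨m, hBm : B m ≤ x, hbm⟩ :=
    Nat.exists_mem_le_of_lt_card (S := {j | B j ≤ x}) (n := b - 1) (by omega)
  have hAa : x < xA + y * a := by
    have hmono : Monotone fun j : ℕ => xA + y * j := fun i j hij => by dsimp only; gcongr
    exact ha ▸ not_le.1 (hmono.natCard_notMem_setOf_le
      (finite_setOf_le_of_tendsto_atTop (tendsto_const_add_mul_natCast_atTop xA hy) x))
  have hma : (m : ℝ) < a + c := by
    have hAm := (abs_le.1 (hclose m)).2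
    refine lt_of_mul_lt_mul_left ?_ hy.le
    linarith
  have hceil : (m : ℤ) - a < ⌈c⌉ := Int.lt_ceil.2 (by push_cast; linarith)
  omega

theorem rank_diff_case_one (xA y c : ℝ) (hy : 0 < y) (hc : 0 ≤ c)
    (B : ℕ → ℝ) (hB : StrictMono B)
    (hclose : ∀ j : ℕ, |(xA + y * j) - B j| ≤ c * y) (x : ℝ)
    (a b : ℕ) (ha : a = Nat.card {j : ℕ | xA + y * j ≤ x})
    (hb : b = Nat.card {j : ℕ | B j ≤ x})
    (hb1 : 1 ≤ b) (hAb : x ≤ xA + y * ((b : ℝ) - 1)) :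
    (b : ℤ) - a ≤ ⌈c⌉ + 1 :=
  rank_diff_case_one_general xA y c hy B hclose x a b ha hb hb1
end

section
/- Let E = (e_j) be an arithmetic divisor sequence and D = (d_j) a strictly increasing divisor sequence with |d_j − e_j| ≤ c for all j, with all divisors eventually positive and v₁,...,vₙ > 0 given scores. For each i, let Aᵢ(j) = e_j/vᵢ and Bᵢ(j) = d_j/vᵢ. Then there is a constant c′ (depending only on c) such that for all x, |Σᵢ r(x, Aᵢ) − Σᵢ r(x, Bᵢ)| ≤ c′·n. -/
/-!
Rescaling by `vᵢ` turns both counts into `#{j | e_j ≤ y}` and `#{j | d_j ≤ y}` with `y = x vᵢ`.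
Since `|d_j − e_j| ≤ c`, the second count is squeezed between `#{j | e_j ≤ y ∓ c}`, i.e. between
the number of naturals up to `t ∓ c/β` with `t = (y − α)/β`; the first count is the number of
naturals up to `t`. A window of length `2c/β` holds at most `2c/β + 1` naturals, so each
summand differs by at most `2c/β + 1`.
-/

/-- `r(x, A)` for the sequence `A = (a j)_j`. -/
noncomputable def rank (x : ℝ) (a : ℕ → ℝ) : ℕ := Nat.card {j : ℕ | a j ≤ x}

lemma rank_le_rank_add {a b : ℕ → ℝ} {c x : ℝ} (hba : ∀ j, b j ≤ a j + c)
    (hfin : {j : ℕ | b j ≤ x + c}.Finite) : rank x a ≤ rank (x + c) b :=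
  Nat.card_mono hfin fun j hj => (hba j).trans (add_le_add_left hj c)

lemma rank_div {a : ℕ → ℝ} {v : ℝ} (hv : 0 < v) (x : ℝ) :
    rank x (fun j => a j / v) = rank (x * v) a := by
  simp only [rank, div_le_iff₀ hv]

lemma setOf_arith_le {α β : ℝ} (hβ : 0 < β) (y : ℝ) :
    {j : ℕ | α + β * j ≤ y} = {j : ℕ | (j : ℝ) ≤ (y - α) / β} := by
  simp only [le_div_iff₀ hβ, le_sub_iff_add_le', mul_comm β]

lemma rank_arith {α β : ℝ} (hβ : 0 < β) (y : ℝ) :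
    rank y (fun j => α + β * j) = rank ((y - α) / β) Nat.cast := by
  rw [rank, setOf_arith_le hβ]
  rfl

lemma finite_setOf_natCast_le (t : ℝ) : {j : ℕ | (j : ℝ) ≤ t}.Finite :=
  (Set.finite_Iic ⌈t⌉₊).subset fun _ hj => Nat.cast_le.mp (hj.trans (Nat.le_ceil t))

lemma rank_natCast_mono {s t : ℝ} (h : s ≤ t) : rank s Nat.cast ≤ rank t Nat.cast :=
  Nat.card_mono (finite_setOf_natCast_le t) fun _ hj => le_trans hj h

lemma rank_natCast_of_nonneg {t : ℝ} (ht : 0 ≤ t) : rank t Nat.cast = ⌊t⌋₊ + 1 := by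
  have : {j : ℕ | (j : ℝ) ≤ t} = Set.Iic ⌊t⌋₊ := by
    ext j
    simp [Nat.le_floor_iff ht]
  simp [rank, this]

lemma rank_natCast_of_neg {t : ℝ} (ht : t < 0) : rank t Nat.cast = 0 := by
  have : {j : ℕ | (j : ℝ) ≤ t} = ∅ :=
    Set.eq_empty_of_forall_notMem fun j hj => (ht.trans_le (Nat.cast_nonneg j)).not_ge hj
  simp [rank, this]

lemma rank_natCast_add_le (t : ℝ) {δ : ℝ} (hδ : 0 ≤ δ) :
    (rank (t + δ) Nat.cast : ℝ) ≤ rank t Nat.cast + δ + 1 := by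
  rcases lt_or_ge (t + δ) 0 with htδ | htδ
  · rw [rank_natCast_of_neg htδ, Nat.cast_zero]
    positivity
  have hfloor : (⌊t + δ⌋₊ : ℝ) ≤ t + δ := Nat.floor_le htδ
  rw [rank_natCast_of_nonneg htδ]
  rcases lt_or_ge t 0 with ht | ht
  · rw [rank_natCast_of_neg ht]
    push_cast
    linarith
  · rw [rank_natCast_of_nonneg ht]
    have := Nat.lt_floor_add_one t
    push_cast
    linarith

lemma abs_rank_arith_sub_rank_le {α β c : ℝ} (hβ : 0 < β) {d : ℕ → ℝ}
    (hclose : ∀ j : ℕ, |d j - (α + β * j)| ≤ c) (y : ℝ) :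
    |(rank y (fun j => α + β * j) : ℝ) - rank y d| ≤ 2 * c / β + 1 := by
  set t := (y - α) / β
  have hδ : 0 ≤ c / β := div_nonneg ((abs_nonneg _).trans (hclose 0)) hβ.le
  have hshift_up : (y + c - α) / β = t + c / β := by ring
  have hshift_down : (y - c - α) / β = t - c / β := by ring
  have hfin : {j : ℕ | α + β * j ≤ y + c}.Finite := by
    rw [setOf_arith_le hβ]
    exact finite_setOf_natCast_le _
  have hupper : rank y d ≤ rank (t + c / β) Nat.cast := by
    rw [← hshift_up, ← rank_arith hβ]
    exact rank_le_rank_add (fun j => by linarith [(abs_le.mp (hclose j)).1]) hfin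
  have hlower : rank (t - c / β) Nat.cast ≤ rank y d := by
    have hfin_d : {j : ℕ | d j ≤ y - c + c}.Finite := by
      rw [sub_add_cancel]
      exact hfin.subset fun j (hj : d j ≤ y) =>
        show α + β * j ≤ y + c by linarith [(abs_le.mp (hclose j)).1]
    have h := rank_le_rank_add (a := fun j => α + β * j)
      (fun j => by linarith [(abs_le.mp (hclose j)).2]) hfin_d
    rwa [sub_add_cancel, rank_arith hβ, hshift_down] at h
  have hwindow := rank_natCast_add_le (t - c / β) (add_nonneg hδ hδ)
  rw [show t - c / β + (c / β + c / β) = t + c / β by ring] at hwindow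
  have hmid₁ := rank_natCast_mono (show t - c / β ≤ t by linarith)
  have hmid₂ := rank_natCast_mono (show t ≤ t + c / β by linarith)
  have htwo : 2 * c / β = c / β + c / β := by ring
  rw [rank_arith hβ, abs_le]
  constructor <;> push_cast [← Nat.cast_le (α := ℝ)] at * <;> linarith

theorem total_rank_close_general (α β c : ℝ) (hβ : 0 < β)
    (d : ℕ → ℝ)
    (hclose : ∀ j : ℕ, |d j - (α + β * j)| ≤ c)
    (n : ℕ) (v : Fin n → ℝ) (hv : ∀ i, 0 < v i) :
    ∃ c' : ℝ, ∀ x : ℝ,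
      |(∑ i, (Nat.card {j : ℕ | (α + β * j) / v i ≤ x} : ℝ)) -
        (∑ i, (Nat.card {j : ℕ | d j / v i ≤ x} : ℝ))| ≤ c' * n := by
  refine ⟨2 * c / β + 1, fun x => ?_⟩
  have hsummand : ∀ i, |(rank x (fun j => (α + β * j) / v i) : ℝ) - rank x (fun j => d j / v i)|
      ≤ 2 * c / β + 1 := fun i => by
    rw [rank_div (hv i), rank_div (hv i)]
    exact abs_rank_arith_sub_rank_le hβ hclose (x * v i)
  rw [← Finset.sum_sub_distrib]
  calc _ ≤ ∑ i, |(rank x (fun j => (α + β * j) / v i) : ℝ) - rank x (fun j => d j / v i)| :=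
        Finset.abs_sum_le_sum_abs _ _
    _ ≤ ∑ _i : Fin n, (2 * c / β + 1) := Finset.sum_le_sum fun i _ => hsummand i
    _ = (2 * c / β + 1) * n := by
      rw [Finset.sum_const, Finset.card_univ, Fintype.card_fin, nsmul_eq_mul, mul_comm]

theorem total_rank_close (α β c : ℝ) (hβ : 0 < β) (hc : 0 ≤ c)
    (d : ℕ → ℝ) (hd : StrictMono d)
    (hclose : ∀ j : ℕ, |d j - (α + β * j)| ≤ c)
    (n : ℕ) (v : Fin n → ℝ) (hv : ∀ i, 0 < v i) :
    ∃ c' : ℝ, ∀ x : ℝ,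
      |(∑ i, (Nat.card {j : ℕ | (α + β * j) / v i ≤ x} : ℝ)) -
        (∑ i, (Nat.card {j : ℕ | d j / v i ≤ x} : ℝ))| ≤ c' * n :=
  total_rank_close_general α β c hβ d hclose n v hv
end

section
/- Let v₁,...,vₙ > 0 be scores and d₀ < d₁ < d₂ < ... a divisor sequence of positive reals tending to infinity. Let τ be the k-th smallest element of the multiset union of the sequences Aᵢ(j) = d_j/vᵢ. Define the allocation aᵢ = |{j : d_j/vᵢ ≤ τ}|. Then Σᵢ aᵢ ≥ k and Σᵢ aᵢ ≤ k + n − 1. -/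
/-- τ is the k-th smallest element (1-indexed, with multiplicity) of the multiset
union of the sequences `A i`. -/
def IsKthSmallest {n : ℕ} (A : Fin n → ℕ → ℝ) (k : ℕ) (τ : ℝ) : Prop :=
  (∃ i j, A i j = τ) ∧
  (∑ i, Nat.card {j : ℕ | A i j < τ}) < k ∧
  k ≤ ∑ i, Nat.card {j : ℕ | A i j ≤ τ}

/-!
The lower bound is part of the definition of `τ`. For the upper bound, the allocation counts the
entries `≤ τ`, which exceed the entries `< τ` (fewer than `k`) only by the entries equal to `τ`;
each strictly increasing sequence `j ↦ d j / v i` takes the value `τ` at most once.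
-/

open Function

theorem Function.Injective.card_setOf_le_le_card_setOf_lt_add_one {α β : Type*} [LinearOrder β]
    {f : α → β} (hf : Injective f) (t : β) :
    Nat.card {x | f x ≤ t} ≤ Nat.card {x | f x < t} + 1 := by
  have hsplit : {x | f x ≤ t} = {x | f x < t} ∪ {x | f x = t} := by
    ext x
    exact le_iff_lt_or_eq
  have hfiber : {x | f x = t}.Subsingleton := fun _ ha _ hb => hf (ha.trans hb.symm)
  simp only [Nat.card_coe_set_eq, hsplit]
  exact (Set.ncard_union_le _ _).trans
    (Nat.add_le_add_left ((Set.ncard_le_one hfiber.finite).mpr hfiber) _)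

theorem sum_card_setOf_le_le_sum_card_setOf_lt_add_card {ι α β : Type*} [Fintype ι]
    [LinearOrder β] {f : ι → α → β} (hf : ∀ i, Injective (f i)) (t : β) :
    ∑ i, Nat.card {x | f i x ≤ t} ≤ ∑ i, Nat.card {x | f i x < t} + Fintype.card ι := by
  calc ∑ i, Nat.card {x | f i x ≤ t}
      ≤ ∑ i, (Nat.card {x | f i x < t} + 1) :=
        Finset.sum_le_sum fun i _ => (hf i).card_setOf_le_le_card_setOf_lt_add_one t
    _ = ∑ i, Nat.card {x | f i x < t} + Fintype.card ι := by
        rw [Finset.sum_add_distrib, Finset.sum_const, Finset.card_univ, smul_eq_mul, mul_one]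

theorem allocation_bounds_general {n k : ℕ} (v : Fin n → ℝ) (hv : ∀ i, 0 < v i)
    (d : ℕ → ℝ) (hd : StrictMono d) (τ : ℝ)
    (hτ : IsKthSmallest (fun i j => d j / v i) k τ) :
    k ≤ ∑ i, Nat.card {j : ℕ | d j / v i ≤ τ} ∧
    ∑ i, Nat.card {j : ℕ | d j / v i ≤ τ} ≤ k + n - 1 := by
  obtain ⟨-, hlt, hle⟩ := hτ
  simp only at hlt hle
  have hinj : ∀ i, Injective fun j => d j / v i := fun i =>
    (hd.div_const (hv i)).injective
  have hbound := sum_card_setOf_le_le_sum_card_setOf_lt_add_card hinj τ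
  rw [Fintype.card_fin] at hbound
  exact ⟨hle, by omega⟩

theorem allocation_bounds {n k : ℕ} (v : Fin n → ℝ) (hv : ∀ i, 0 < v i)
    (d : ℕ → ℝ) (hd : StrictMono d) (hdpos : ∀ j, 0 < d j)
    (hTop : Filter.Tendsto d Filter.atTop Filter.atTop)
    (hk : 1 ≤ k) (τ : ℝ)
    (hτ : IsKthSmallest (fun i j => d j / v i) k τ) :
    k ≤ ∑ i, Nat.card {j : ℕ | d j / v i ≤ τ} ∧
    ∑ i, Nat.card {j : ℕ | d j / v i ≤ τ} ≤ k + n - 1 :=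
  allocation_bounds_general v hv d hd τ hτ
end
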